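/- Let A be the localized path algebra of the doubled A_2 quiver, P = ½((1+ee*)(∂/∂e*)(∂/∂e) - (1+e*e)(∂/∂e)(∂/∂e*)) the double quasi-Poisson bivector, and ω₁ ≡ ½(Φ de* de - Φ^{-1} de de*) the quasi-bisymplectic form. Then evaluated on de one has the compatibility 4·ι(ω₁)ι(P)(de) = 2de + Φ^{-1}·de·Φ^{-1} + Φ·de·Φ = 4de - [e, Φ^{-1}dΦ - dΦ·Φ^{-1}], i.e., ι(ω₁)ι(P) = 1 - ¼T on de, where T(dp) = [p, Φ^{-1}dΦ - dΦΦ^{-1}]. -/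

import Mathlib

open scoped TensorProduct

section

variable {k : Type*} [Field k] {A : Type*} [Ring A] [Algebra k A]
  {Ω : Type*} [Ring Ω] [Algebra k Ω]

/-- Sweedler-type evaluation: for `t = ∑ x ⊗ y` this returns `∑ ι(y) * w * ι(x)`. -/
noncomputable def sweedler (ι : A →ₐ[k] Ω) (w : Ω) : A ⊗[k] A →ₗ[k] Ω :=
  TensorProduct.lift
    (LinearMap.mk₂ k (fun x y => ι y * w * ι x)
      (fun _ _ _ => by simp [map_add, mul_add])
      (fun _ _ _ => by simp [map_smul, mul_smul_comm])
      (fun _ _ _ => by simp [map_add, add_mul])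
      (fun _ _ _ => by simp [map_smul, smul_mul_assoc]))

/-- `(a δ b)(c) = δ(c)' b ⊗ a δ(c)''`: the inner bimodule action on double derivations. -/
noncomputable def innerTwist (a b : A) (δ : A →ₗ[k] A ⊗[k] A) : A →ₗ[k] A ⊗[k] A :=
  (TensorProduct.map (LinearMap.mulRight k b) (LinearMap.mulLeft k a)) ∘ₗ δ

end

/-!
`Φ = a₁⁻¹ + a₂` is a unit with inverse `a₁ + a₂⁻¹`, it commutes with the vertex idempotents, and
`e Φ⁻¹ = Φ e`. Applying the Leibniz rule to `Φ Φ⁻¹ = 1` and to `e Φ⁻¹ = Φ e` and conjugating by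
`Φ` turns `[e, Φ⁻¹dΦ - dΦΦ⁻¹]` into `2de - Φ⁻¹deΦ⁻¹ - ΦdeΦ`. On the contraction side,
`∂/∂e*` kills `e`, so only the `de*` slots of `ω₁` contribute; since `de ∈ e₂Ωe₁` and `Φ^{±1}`
commute with `e₁, e₂`, the four resulting Sweedler terms are `de`, `ΦdeΦ`, `Φ⁻¹deΦ⁻¹` and `de`.
-/

section Peirce

variable {R : Type*} [Ring R] {e f g h x y : R}

theorem mul_eq_self_of_corner_left (he : e * e = e) (hx : e * x * f = x) : e * x = x := by
  rw [← hx, ← mul_assoc, ← mul_assoc, he]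

theorem mul_eq_self_of_corner_right (hf : f * f = f) (hx : e * x * f = x) : x * f = x := by
  rw [← hx, mul_assoc, hf]

theorem mul_eq_zero_of_corner (hx : e * x * f = x) (hy : g * y * h = y) (hfg : f * g = 0) :
    x * y = 0 := by
  rw [← hx, ← hy]
  simp only [mul_assoc]
  rw [← mul_assoc f g, hfg]
  simp only [zero_mul, mul_zero]

theorem corner_mul (he : e * e = e) (hg : g * g = g) (hx : e * x * f = x)
    (hy : f * y * g = y) : e * (x * y) * g = x * y := by
  rw [← mul_assoc, mul_eq_self_of_corner_left he hx, mul_assoc,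
    mul_eq_self_of_corner_right hg hy]

theorem corner_add (hx : e * x * f = x) (hy : e * y * f = y) : e * (x + y) * f = x + y := by
  rw [mul_add, add_mul, hx, hy]

theorem corner_mul_mul_of_commute {a b : R} (ha : Commute a e) (hb : Commute b f)
    (hx : e * x * f = x) : e * (a * x * b) * f = a * x * b := by
  conv_rhs => rw [← hx]
  simp only [mul_assoc, hb.eq]
  rw [← mul_assoc e a, ← ha.eq]
  simp only [mul_assoc]

end Peirce

/-- Relations of the localised path algebra of the doubled `A₂` quiver. `E` and `Es` are the
arrows `e : 1 → 2` and `e* : 2 → 1`, and `b1`, `b2` are the inverses of `a₁ = e₁ + e*e` and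
`a₂ = e₂ + ee*` in the corners `e₁Ae₁` and `e₂Ae₂`; thus `Φ = a₁⁻¹ + a₂ = b1 + (e2 + E * Es)`
and `Φ⁻¹ = a₁ + a₂⁻¹ = e1 + Es * E + b2`. -/
structure DoubledA2Relations {A : Type*} [Ring A] (e1 e2 E Es b1 b2 : A) : Prop where
  idem_e1 : e1 * e1 = e1
  idem_e2 : e2 * e2 = e2
  e1_mul_e2 : e1 * e2 = 0
  e2_mul_e1 : e2 * e1 = 0
  e1_add_e2 : e1 + e2 = 1
  corner_E : e2 * E * e1 = E
  corner_Es : e1 * Es * e2 = Es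
  corner_b1 : e1 * b1 * e1 = b1
  a1_mul_b1 : (e1 + Es * E) * b1 = e1
  b1_mul_a1 : b1 * (e1 + Es * E) = e1
  corner_b2 : e2 * b2 * e2 = b2
  a2_mul_b2 : (e2 + E * Es) * b2 = e2
  b2_mul_a2 : b2 * (e2 + E * Es) = e2

namespace DoubledA2Relations

variable {A : Type*} [Ring A] {e1 e2 E Es b1 b2 : A}

theorem corner_e1 (H : DoubledA2Relations e1 e2 E Es b1 b2) : e1 * e1 * e1 = e1 := by
  rw [H.idem_e1, H.idem_e1]

theorem corner_e2 (H : DoubledA2Relations e1 e2 E Es b1 b2) : e2 * e2 * e2 = e2 := by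
  rw [H.idem_e2, H.idem_e2]

theorem corner_a1 (H : DoubledA2Relations e1 e2 E Es b1 b2) :
    e1 * (e1 + Es * E) * e1 = e1 + Es * E :=
  corner_add H.corner_e1 (corner_mul H.idem_e1 H.idem_e1 H.corner_Es H.corner_E)

theorem corner_a2 (H : DoubledA2Relations e1 e2 E Es b1 b2) :
    e2 * (e2 + E * Es) * e2 = e2 + E * Es :=
  corner_add H.corner_e2 (corner_mul H.idem_e2 H.idem_e2 H.corner_E H.corner_Es)

theorem phi_mul_phiInv (H : DoubledA2Relations e1 e2 E Es b1 b2) :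
    (b1 + (e2 + E * Es)) * (e1 + Es * E + b2) = 1 := by
  rw [add_mul, mul_add b1 (e1 + Es * E), mul_add (e2 + E * Es) (e1 + Es * E), H.b1_mul_a1,
    H.a2_mul_b2, mul_eq_zero_of_corner H.corner_b1 H.corner_b2 H.e1_mul_e2,
    mul_eq_zero_of_corner H.corner_a2 H.corner_a1 H.e2_mul_e1, add_zero, zero_add, H.e1_add_e2]

theorem phiInv_mul_phi (H : DoubledA2Relations e1 e2 E Es b1 b2) :
    (e1 + Es * E + b2) * (b1 + (e2 + E * Es)) = 1 := by
  rw [add_mul, mul_add (e1 + Es * E) b1, mul_add b2 b1, H.a1_mul_b1, H.b2_mul_a2,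
    mul_eq_zero_of_corner H.corner_a1 H.corner_a2 H.e1_mul_e2,
    mul_eq_zero_of_corner H.corner_b2 H.corner_b1 H.e2_mul_e1, add_zero, zero_add, H.e1_add_e2]

theorem E_mul_phiInv (H : DoubledA2Relations e1 e2 E Es b1 b2) :
    E * (e1 + Es * E + b2) = (b1 + (e2 + E * Es)) * E := by
  rw [mul_add, add_mul, mul_eq_zero_of_corner H.corner_E H.corner_b2 H.e1_mul_e2,
    mul_eq_zero_of_corner H.corner_b1 H.corner_E H.e1_mul_e2, add_zero, zero_add, mul_add,
    add_mul, mul_eq_self_of_corner_right H.idem_e1 H.corner_E,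
    mul_eq_self_of_corner_left H.idem_e2 H.corner_E, mul_assoc]

theorem phiInv_mul_e1 (H : DoubledA2Relations e1 e2 E Es b1 b2) :
    (e1 + Es * E + b2) * e1 = e1 + Es * E := by
  rw [add_mul, mul_eq_self_of_corner_right H.idem_e1 H.corner_a1,
    mul_eq_zero_of_corner H.corner_b2 H.corner_e1 H.e2_mul_e1, add_zero]

theorem e1_mul_phiInv (H : DoubledA2Relations e1 e2 E Es b1 b2) :
    e1 * (e1 + Es * E + b2) = e1 + Es * E := by
  rw [mul_add, mul_eq_self_of_corner_left H.idem_e1 H.corner_a1,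
    mul_eq_zero_of_corner H.corner_e1 H.corner_b2 H.e1_mul_e2, add_zero]

theorem phi_mul_e2 (H : DoubledA2Relations e1 e2 E Es b1 b2) :
    (b1 + (e2 + E * Es)) * e2 = e2 + E * Es := by
  rw [add_mul, mul_eq_self_of_corner_right H.idem_e2 H.corner_a2,
    mul_eq_zero_of_corner H.corner_b1 H.corner_e2 H.e1_mul_e2, zero_add]

theorem e2_mul_phi (H : DoubledA2Relations e1 e2 E Es b1 b2) :
    e2 * (b1 + (e2 + E * Es)) = e2 + E * Es := by
  rw [mul_add, mul_eq_self_of_corner_left H.idem_e2 H.corner_a2,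
    mul_eq_zero_of_corner H.corner_e2 H.corner_b1 H.e2_mul_e1, zero_add]

theorem commute_phi_e2 (H : DoubledA2Relations e1 e2 E Es b1 b2) :
    Commute (b1 + (e2 + E * Es)) e2 :=
  H.phi_mul_e2.trans H.e2_mul_phi.symm

theorem commute_phiInv_e1 (H : DoubledA2Relations e1 e2 E Es b1 b2) :
    Commute (e1 + Es * E + b2) e1 :=
  H.phiInv_mul_e1.trans H.e1_mul_phiInv.symm

theorem commute_phi_e1 (H : DoubledA2Relations e1 e2 E Es b1 b2) :
    Commute (b1 + (e2 + E * Es)) e1 := by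
  rw [eq_sub_of_add_eq H.e1_add_e2]
  exact (Commute.one_right _).sub_right H.commute_phi_e2

theorem commute_phiInv_e2 (H : DoubledA2Relations e1 e2 E Es b1 b2) :
    Commute (e1 + Es * E + b2) e2 := by
  rw [eq_sub_of_add_eq' H.e1_add_e2]
  exact (Commute.one_right _).sub_right H.commute_phiInv_e1

theorem e1_mul_one_add (H : DoubledA2Relations e1 e2 E Es b1 b2) :
    e1 * (1 + Es * E) = e1 + Es * E := by
  rw [mul_add, mul_one, ← mul_assoc, mul_eq_self_of_corner_left H.idem_e1 H.corner_Es]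

theorem one_add_mul_e2 (H : DoubledA2Relations e1 e2 E Es b1 b2) :
    (1 + E * Es) * e2 = e2 + E * Es := by
  rw [add_mul, one_mul, mul_assoc, mul_eq_self_of_corner_right H.idem_e2 H.corner_Es]

end DoubledA2Relations

section Leibniz

variable {A Ω F : Type*} [Ring A] [Ring Ω] [FunLike F A Ω] {ι : F} {d : A → Ω}

theorem leibniz_corner (hd : ∀ u v, d (u * v) = ι u * d v + d u * ι v) {e f x : A}
    (he : d e = 0) (hf : d f = 0) : d (e * x * f) = ι e * d x * ι f := by
  rw [hd, hd, he, hf, mul_zero, zero_mul, add_zero, zero_add]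

variable [RingHomClass F A Ω]

theorem leibniz_map_one (hd : ∀ u v, d (u * v) = ι u * d v + d u * ι v) : d 1 = 0 := by
  have h := hd 1 1
  rw [one_mul, map_one, one_mul, mul_one] at h
  exact left_eq_add.mp h

theorem commutator_logDeriv_of_intertwine (hd : ∀ u v, d (u * v) = ι u * d v + d u * ι v)
    {x φ ψ : A} (hφψ : φ * ψ = 1) (hψφ : ψ * φ = 1) (hx : x * ψ = φ * x) :
    ι x * (ι ψ * d φ - d φ * ι ψ) - (ι ψ * d φ - d φ * ι ψ) * ι x =
      2 • d x - ι ψ * d x * ι ψ - ι φ * d x * ι φ := by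
  set X := ι x
  set P := ι φ
  set Q := ι ψ
  have hPQ : P * Q = 1 := by rw [← map_mul, hφψ, map_one]
  have hQP : Q * P = 1 := by rw [← map_mul, hψφ, map_one]
  have hXQ : X * Q = P * X := by rw [← map_mul, ← map_mul, hx]
  have hXP : X * P = Q * X := by
    calc X * P = Q * (X * Q) * P := by rw [hXQ, ← mul_assoc, hQP, one_mul]
      _ = Q * X := by rw [mul_assoc, mul_assoc, hQP, mul_one]
  have hPdQ : P * d ψ = -(d φ * Q) := by
    rw [← add_eq_zero_iff_eq_neg, ← hd, hφψ, leibniz_map_one hd]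
  have hdx : X * d ψ + d x * Q = P * d x + d φ * X := by rw [← hd, ← hd, hx]
  have hS : X * d φ * Q + Q * d φ * X = Q * d x * Q - d x := by
    have h := congrArg (Q * ·) hdx
    simp only [mul_add, ← mul_assoc, ← hXP, hQP, one_mul] at h
    rw [mul_assoc X P, hPdQ, mul_neg, ← mul_assoc, neg_add_eq_iff_eq_add] at h
    rw [h]
    abel
  calc X * (Q * d φ - d φ * Q) - (Q * d φ - d φ * Q) * X
      = (X * Q * d φ + d φ * (Q * X)) - (X * d φ * Q + Q * d φ * X) := by noncomm_ring
    _ = P * (X * d φ * Q + Q * d φ * X) * P - (X * d φ * Q + Q * d φ * X) := by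
      rw [hXQ, ← hXP]
      simp only [mul_add, add_mul, mul_assoc, hQP, mul_one]
      rw [← mul_assoc P Q, hPQ, one_mul]
    _ = 2 • d x - Q * d x * Q - P * d x * P := by
      rw [hS]
      simp only [mul_sub, sub_mul, ← mul_assoc, hPQ, one_mul]
      simp only [mul_assoc, hQP, mul_one]
      noncomm_ring

end Leibniz

theorem sweedler_tmul {k A Ω : Type*} [Field k] [Ring A] [Algebra k A] [Ring Ω] [Algebra k Ω]
    (ι : A →ₐ[k] Ω) (w : Ω) (x y : A) : sweedler ι w (x ⊗ₜ[k] y) = ι y * w * ι x := by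
  simp [sweedler]

theorem innerTwist_apply_of_eq_tmul {k A : Type*} [Field k] [Ring A] [Algebra k A]
    {δ : A →ₗ[k] A ⊗[k] A} {c x y : A} (a b : A) (h : δ c = x ⊗ₜ[k] y) :
    innerTwist a b δ c = (x * b) ⊗ₜ[k] (a * y) := by
  simp [innerTwist, h]

theorem corner_sandwich_sum {R : Type*} [Ring R] {ε1 ε2 φ ψ u : R} (hφψ : φ * ψ = 1)
    (hφ1 : Commute φ ε1) (hφ2 : Commute φ ε2) (hψ1 : Commute ψ ε1) (hψ2 : Commute ψ ε2)
    (hu : ε2 * u * ε1 = u) :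
    ε2 * (u * φ) * (ψ * ε1) + ε2 * φ * (u * φ) * ε1 +
        (ε2 * (ψ * u) * (ψ * ε1) + ε2 * φ * (ψ * u) * ε1) =
      2 • u + ψ * u * ψ + φ * u * φ := by
  have h1 : ε2 * (u * φ) * (ψ * ε1) = u := by
    calc ε2 * (u * φ) * (ψ * ε1) = ε2 * u * (φ * ψ) * ε1 := by simp only [mul_assoc]
      _ = u := by rw [hφψ, mul_one, hu]
  have h2 : ε2 * φ * (u * φ) * ε1 = φ * u * φ := by
    rw [← corner_mul_mul_of_commute hφ2 hφ1 hu]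
    simp only [mul_assoc]
  have h3 : ε2 * (ψ * u) * (ψ * ε1) = ψ * u * ψ := by
    rw [← corner_mul_mul_of_commute hψ2 hψ1 hu]
    simp only [mul_assoc]
  have h4 : ε2 * φ * (ψ * u) * ε1 = u := by
    calc ε2 * φ * (ψ * u) * ε1 = ε2 * (φ * ψ) * u * ε1 := by simp only [mul_assoc]
      _ = u := by rw [hφψ, mul_one, hu]
  rw [h1, h2, h3, h4]
  abel

theorem double_quasi_poisson_compatibility_A2_general
    {k : Type*} [Field k] [CharZero k] {A : Type*} [Ring A] [Algebra k A]
    {Ω : Type*} [Ring Ω] [Algebra k Ω]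
    -- the localized path algebra of the doubled `A₂` quiver
    (e1 e2 E Es b1 b2 : A)
    (h1 : e1 * e1 = e1) (h2 : e2 * e2 = e2)
    (h12 : e1 * e2 = 0) (h21 : e2 * e1 = 0) (hsum : e1 + e2 = 1)
    (hE : e2 * E * e1 = E) (hEs : e1 * Es * e2 = Es)
    (hb1 : e1 * b1 * e1 = b1)
    (hb1l : (e1 + Es * E) * b1 = e1) (hb1r : b1 * (e1 + Es * E) = e1)
    (hb2 : e2 * b2 * e2 = b2)
    (hb2l : (e2 + E * Es) * b2 = e2) (hb2r : b2 * (e2 + E * Es) = e2)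
    -- the noncommutative differential forms relative to `R`
    (ι : A →ₐ[k] Ω) (D : Ω →ₗ[k] Ω)
    (hLeib : ∀ u v : A, D (ι (u * v)) = ι u * D (ι v) + D (ι u) * ι v)
    (hDe1 : D (ι e1) = 0) (hDe2 : D (ι e2) = 0)
    -- the contraction operator, linear in the double derivation
    (ctr : (A →ₗ[k] A ⊗[k] A) → Ω →ₗ[k] Ω)
    (hctrSmul : ∀ (c : k) (δ : A →ₗ[k] A ⊗[k] A) (ω : Ω), ctr (c • δ) ω = c • ctr δ ω)
    (hctr : ∀ (δ : A →ₗ[k] A ⊗[k] A) (p q r : A),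
      ctr δ (ι p * D (ι q) * D (ι r)) =
        sweedler ι (D (ι r) * ι p) (δ q) - sweedler ι (ι p * D (ι q)) (δ r))
    -- the partial double derivations `∂/∂e` and `∂/∂e*`
    (δes : A →ₗ[k] A ⊗[k] A)
    (hδesEs : δes Es = e1 ⊗ₜ[k] e2) (hδesE : δes E = 0) :
    -- `Φ = a₁⁻¹ + a₂`, `Φ⁻¹ = a₁ + a₂⁻¹`
    ((4 : k) • ctr
        ((2 : k)⁻¹ • (innerTwist 1 (1 + Es * E) δes + innerTwist (1 + E * Es) 1 δes))
        ((2 : k)⁻¹ • (ι (b1 + (e2 + E * Es)) * D (ι Es) * D (ι E) -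
          ι ((e1 + Es * E) + b2) * D (ι E) * D (ι Es))) =
      (2 : k) • D (ι E) + ι ((e1 + Es * E) + b2) * D (ι E) * ι ((e1 + Es * E) + b2) +
        ι (b1 + (e2 + E * Es)) * D (ι E) * ι (b1 + (e2 + E * Es))) ∧
    ((2 : k) • D (ι E) + ι ((e1 + Es * E) + b2) * D (ι E) * ι ((e1 + Es * E) + b2) +
        ι (b1 + (e2 + E * Es)) * D (ι E) * ι (b1 + (e2 + E * Es)) =
      (4 : k) • D (ι E) -
        (ι E * (ι ((e1 + Es * E) + b2) * D (ι (b1 + (e2 + E * Es))) -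
            D (ι (b1 + (e2 + E * Es))) * ι ((e1 + Es * E) + b2)) -
          (ι ((e1 + Es * E) + b2) * D (ι (b1 + (e2 + E * Es))) -
            D (ι (b1 + (e2 + E * Es))) * ι ((e1 + Es * E) + b2)) * ι E)) := by
  have H : DoubledA2Relations e1 e2 E Es b1 b2 :=
    ⟨h1, h2, h12, h21, hsum, hE, hEs, hb1, hb1l, hb1r, hb2, hb2l, hb2r⟩
  have hdE : ι e2 * D (ι E) * ι e1 = D (ι E) := by
    rw [← leibniz_corner (d := fun u => D (ι u)) hLeib hDe2 hDe1, hE]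
  refine ⟨?_, ?_⟩
  · have hδE : (innerTwist 1 (1 + Es * E) δes + innerTwist (1 + E * Es) 1 δes) E = 0 := by
      simp [innerTwist, hδesE]
    have hδEs : (innerTwist 1 (1 + Es * E) δes + innerTwist (1 + E * Es) 1 δes) Es =
        ((e1 + Es * E + b2) * e1) ⊗ₜ[k] e2 + e1 ⊗ₜ[k] (e2 * (b1 + (e2 + E * Es))) := by
      rw [H.phiInv_mul_e1, H.e2_mul_phi, LinearMap.add_apply,
        innerTwist_apply_of_eq_tmul _ _ hδesEs, innerTwist_apply_of_eq_tmul _ _ hδesEs, one_mul,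
        mul_one, H.e1_mul_one_add, H.one_add_mul_e2]
    rw [hctrSmul, map_smul, map_sub, hctr, hctr, hδE, hδEs]
    simp only [map_zero, (sweedler ι _).map_add, sweedler_tmul, map_mul, smul_smul]
    rw [show (4 : k) * (2⁻¹ * 2⁻¹) = 1 by norm_num, one_smul, sub_zero, zero_sub,
      sub_neg_eq_add, two_smul, corner_sandwich_sum (by rw [← map_mul, H.phi_mul_phiInv, map_one])
        (H.commute_phi_e1.map ι) (H.commute_phi_e2.map ι) (H.commute_phiInv_e1.map ι)
        (H.commute_phiInv_e2.map ι) hdE, two_smul]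
  · rw [commutator_logDeriv_of_intertwine (ι := ι) (d := fun u => D (ι u)) hLeib
      H.phi_mul_phiInv H.phiInv_mul_phi H.E_mul_phiInv]
    module

/-- Let `A` be the localized path algebra of the doubled `A₂` quiver,
`P = ½((1+ee^*)(∂/∂e^*)(∂/∂e) - (1+e^*e)(∂/∂e)(∂/∂e^*))` the double quasi-Poisson bivector,
and `ω₁ = ½(Φ de^* de - Φ⁻¹ de de^*)` the quasi-bisymplectic form.  Then, evaluated on `de`,
one has the compatibility
`4·ι(ω₁)ι(P)(de) = 2de + Φ⁻¹·de·Φ⁻¹ + Φ·de·Φ = 4de - [e, Φ⁻¹dΦ - dΦ·Φ⁻¹]`,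
i.e. `ι(ω₁)ι(P) = 1 - ¼T` on `de`, where `T(dp) = [p, Φ⁻¹dΦ - dΦΦ⁻¹]`.

Here `ι(P)(de) = ½((∂/∂e^*)(1+e^*e) + (1+ee^*)(∂/∂e^*))` (a double derivation), and the
noncommutative forms are axiomatised by an embedding `ι : A → Ω`, a differential `D`
vanishing on `R`, and a contraction operator `ctr` with
`ι_δ(p dq dr) = δ(q)''·dr·p·δ(q)' − δ(r)''·p·dq·δ(r)'` on generating `2`-forms. -/
theorem double_quasi_poisson_compatibility_A2
    {k : Type*} [Field k] [CharZero k] {A : Type*} [Ring A] [Algebra k A]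
    {Ω : Type*} [Ring Ω] [Algebra k Ω]
    -- the localized path algebra of the doubled `A₂` quiver
    (e1 e2 E Es b1 b2 : A)
    (h1 : e1 * e1 = e1) (h2 : e2 * e2 = e2)
    (h12 : e1 * e2 = 0) (h21 : e2 * e1 = 0) (hsum : e1 + e2 = 1)
    (hE : e2 * E * e1 = E) (hEs : e1 * Es * e2 = Es)
    (hb1 : e1 * b1 * e1 = b1)
    (hb1l : (e1 + Es * E) * b1 = e1) (hb1r : b1 * (e1 + Es * E) = e1)
    (hb2 : e2 * b2 * e2 = b2)
    (hb2l : (e2 + E * Es) * b2 = e2) (hb2r : b2 * (e2 + E * Es) = e2)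
    -- the noncommutative differential forms relative to `R`
    (ι : A →ₐ[k] Ω) (D : Ω →ₗ[k] Ω)
    (hLeib : ∀ u v : A, D (ι (u * v)) = ι u * D (ι v) + D (ι u) * ι v)
    (hDe1 : D (ι e1) = 0) (hDe2 : D (ι e2) = 0)
    -- the contraction operator, linear in the double derivation
    (ctr : (A →ₗ[k] A ⊗[k] A) → Ω →ₗ[k] Ω)
    (hctrAdd : ∀ (δ δ' : A →ₗ[k] A ⊗[k] A) (ω : Ω), ctr (δ + δ') ω = ctr δ ω + ctr δ' ω)
    (hctrSmul : ∀ (c : k) (δ : A →ₗ[k] A ⊗[k] A) (ω : Ω), ctr (c • δ) ω = c • ctr δ ω)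
    (hctr : ∀ (δ : A →ₗ[k] A ⊗[k] A) (p q r : A),
      ctr δ (ι p * D (ι q) * D (ι r)) =
        sweedler ι (D (ι r) * ι p) (δ q) - sweedler ι (ι p * D (ι q)) (δ r))
    -- the partial double derivations `∂/∂e` and `∂/∂e*`
    (δe δes : A →ₗ[k] A ⊗[k] A)
    (hδeder : ∀ u v : A,
      δe (u * v) = TensorProduct.map (LinearMap.mulLeft k u) LinearMap.id (δe v) +
        TensorProduct.map LinearMap.id (LinearMap.mulRight k v) (δe u))
    (hδesder : ∀ u v : A,
      δes (u * v) = TensorProduct.map (LinearMap.mulLeft k u) LinearMap.id (δes v) +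
        TensorProduct.map LinearMap.id (LinearMap.mulRight k v) (δes u))
    (hδeE : δe E = e2 ⊗ₜ[k] e1) (hδeEs : δe Es = 0)
    (hδee1 : δe e1 = 0) (hδee2 : δe e2 = 0)
    (hδesEs : δes Es = e1 ⊗ₜ[k] e2) (hδesE : δes E = 0)
    (hδese1 : δes e1 = 0) (hδese2 : δes e2 = 0) :
    -- `Φ = a₁⁻¹ + a₂`, `Φ⁻¹ = a₁ + a₂⁻¹`
    ((4 : k) • ctr
        ((2 : k)⁻¹ • (innerTwist 1 (1 + Es * E) δes + innerTwist (1 + E * Es) 1 δes))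
        ((2 : k)⁻¹ • (ι (b1 + (e2 + E * Es)) * D (ι Es) * D (ι E) -
          ι ((e1 + Es * E) + b2) * D (ι E) * D (ι Es))) =
      (2 : k) • D (ι E) + ι ((e1 + Es * E) + b2) * D (ι E) * ι ((e1 + Es * E) + b2) +
        ι (b1 + (e2 + E * Es)) * D (ι E) * ι (b1 + (e2 + E * Es))) ∧
    ((2 : k) • D (ι E) + ι ((e1 + Es * E) + b2) * D (ι E) * ι ((e1 + Es * E) + b2) +
        ι (b1 + (e2 + E * Es)) * D (ι E) * ι (b1 + (e2 + E * Es)) =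
      (4 : k) • D (ι E) -
        (ι E * (ι ((e1 + Es * E) + b2) * D (ι (b1 + (e2 + E * Es))) -
            D (ι (b1 + (e2 + E * Es))) * ι ((e1 + Es * E) + b2)) -
          (ι ((e1 + Es * E) + b2) * D (ι (b1 + (e2 + E * Es))) -
            D (ι (b1 + (e2 + E * Es))) * ι ((e1 + Es * E) + b2)) * ι E)) :=
  double_quasi_poisson_compatibility_A2_general e1 e2 E Es b1 b2 h1 h2 h12 h21 hsum hE hEs hb1 hb1l
    hb1r hb2 hb2l hb2r ι D hLeib hDe1 hDe2 ctr hctrSmul hctr δes hδesEs hδesE
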